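/- arXiv:2503.05599 — 3 statements merged into one kernel-verified Lean document; each statement's English description precedes it below -/
import Mathlib

section
/- For every complex number t with |t| ≤ 1 and t ≠ 1, one has 2·Σ_{k=1}^∞ C(2k,k)² (t/16)^k (2H_{2k} − H_k) = −(Σ_{k=0}^∞ C(2k,k)² (t/16)^k) · Log(1−t). -/
/-!
Write `eₖ = C(2k,k)² / 16ᵏ`, the coefficients of `₂F₁(½,½;1;t) = (2/π) K(√t)`. Multiplying
`∑ eₖ tᵏ` by `-Log(1 - t) = ∑ tⁿ / n` gives the Cauchy product `∑ cₙ tⁿ` with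
`cₙ = ∑_{k<n} eₖ / (n - k)`. Splitting `(n+1)²` and `(n+½)²` as differences of squares and using
`(k+1)² e_{k+1} = (k+½)² eₖ` yields the recurrence `(n+1)² c_{n+1} = (n+½)² cₙ + (2n+1) eₙ`,
which `2 eₙ (2 H_{2n} - Hₙ)` also satisfies; hence `cₙ = 2 eₙ (2 H_{2n} - Hₙ)`.
On the unit circle `eₖ ≥ 1/(4k)`, so neither series is (absolutely) summable and both sides are
`0` as `tsum`s.
-/

/-- The `n`-th harmonic number `H_n = ∑_{j=1}^n 1/j`. -/
noncomputable def H (n : ℕ) : ℝ := ∑ j ∈ Finset.range n, (1 : ℝ) / (j + 1)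

open Finset

noncomputable def ellipticCoeff (k : ℕ) : ℝ := (Nat.centralBinom k : ℝ) ^ 2 / 16 ^ k

noncomputable def logConv (a : ℕ → ℝ) (n : ℕ) : ℝ := ∑ k ∈ range n, a k / (n - k)

lemma summable_ofReal_mul_pow_iff {a : ℕ → ℝ} {t : ℂ} (ht : ‖t‖ = 1) :
    Summable (fun n => (a n : ℂ) * t ^ n) ↔ Summable a := by
  rw [← summable_norm_iff, ← summable_abs_iff (f := a)]
  simp [ht]

lemma logConv_zero (a : ℕ → ℝ) : logConv a 0 = 0 := by
  simp [logConv]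

lemma le_logConv_succ {a : ℕ → ℝ} (ha : ∀ k, 0 ≤ a k) (n : ℕ) : a n ≤ logConv a (n + 1) := by
  calc a n = a n / (((n + 1 : ℕ) : ℝ) - n) := by push_cast; ring
    _ ≤ logConv a (n + 1) :=
      single_le_sum (f := fun k => a k / (((n + 1 : ℕ) : ℝ) - k))
        (fun k hk => div_nonneg (ha k) (sub_nonneg.2 (by exact_mod_cast (mem_range.1 hk).le)))
        (self_mem_range_succ n)

lemma not_summable_logConv {a : ℕ → ℝ} (ha : ∀ k, 0 ≤ a k) (h : ¬ Summable a) :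
    ¬ Summable (logConv a) := fun hc =>
  h (((summable_nat_add_iff 1).2 hc).of_nonneg_of_le ha (le_logConv_succ ha))

lemma sum_range_succ_mul_pow_div (a : ℕ → ℝ) (t : ℂ) (n : ℕ) :
    ∑ k ∈ range (n + 1), (a k : ℂ) * t ^ k * (t ^ (n - k) / ((n - k : ℕ) : ℂ)) =
      (logConv a n : ℂ) * t ^ n := by
  rw [sum_range_succ, Nat.sub_self, Nat.cast_zero, div_zero, mul_zero, add_zero, logConv]
  push_cast
  rw [sum_mul]
  refine sum_congr rfl fun k hk => ?_
  have hk := (mem_range.1 hk).le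
  rw [Nat.cast_sub hk, ← pow_mul_pow_sub t hk]
  ring

lemma tsum_logConv_mul_pow_of_norm_lt_one {a : ℕ → ℝ} {t : ℂ}
    (ha : Summable fun k => ‖(a k : ℂ) * t ^ k‖) (ht : ‖t‖ < 1) :
    ∑' n, (logConv a n : ℂ) * t ^ n = (∑' k, (a k : ℂ) * t ^ k) * -Complex.log (1 - t) := by
  have hlog : Summable fun n : ℕ => ‖t ^ n / n‖ := by
    refine (summable_geometric_of_lt_one (norm_nonneg t) ht).of_nonneg_of_le
      (fun _ => norm_nonneg _) fun n => ?_
    rw [norm_div, norm_pow, Complex.norm_natCast]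
    rcases n.eq_zero_or_pos with rfl | hn
    · simp
    · exact div_le_self (by positivity) (by exact_mod_cast hn)
  rw [← (Complex.hasSum_taylorSeries_neg_log ht).tsum_eq,
    tsum_mul_tsum_eq_tsum_sum_range_of_summable_norm ha hlog]
  exact tsum_congr fun n => (sum_range_succ_mul_pow_div a t n).symm

lemma H_succ (n : ℕ) : H (n + 1) = H n + 1 / (n + 1) := by
  simp [H, sum_range_succ]

namespace ellipticCoeff

lemma pos (k : ℕ) : 0 < ellipticCoeff k := by
  unfold ellipticCoeff
  have := Nat.centralBinom_pos k
  positivity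

lemma one : ellipticCoeff 1 = 1 / 4 := by
  norm_num [ellipticCoeff, Nat.centralBinom, Nat.choose]

lemma succ (k : ℕ) :
    ((k : ℝ) + 1) ^ 2 * ellipticCoeff (k + 1) = ((k : ℝ) + 1 / 2) ^ 2 * ellipticCoeff k := by
  have h : ((k : ℝ) + 1) * Nat.centralBinom (k + 1) = 2 * (2 * k + 1) * Nat.centralBinom k := by
    exact_mod_cast Nat.succ_mul_centralBinom_succ k
  unfold ellipticCoeff
  calc ((k : ℝ) + 1) ^ 2 * ((Nat.centralBinom (k + 1) : ℝ) ^ 2 / 16 ^ (k + 1))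
      = (((k : ℝ) + 1) * Nat.centralBinom (k + 1)) ^ 2 / (16 * 16 ^ k) := by ring
    _ = _ := by rw [h]; ring

lemma succ_le (k : ℕ) : ellipticCoeff (k + 1) ≤ ellipticCoeff k := by
  have hk : ((k : ℝ) + 1 / 2) ^ 2 ≤ ((k : ℝ) + 1) ^ 2 := by gcongr; norm_num
  refine le_of_mul_le_mul_left ?_ (by positivity : (0 : ℝ) < ((k : ℝ) + 1) ^ 2)
  rw [succ]
  exact mul_le_mul_of_nonneg_right hk (pos k).le

lemma le_one (k : ℕ) : ellipticCoeff k ≤ 1 := by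
  simpa [ellipticCoeff] using antitone_nat_of_succ_le succ_le (Nat.zero_le k)

lemma inv_le (k : ℕ) : 1 / (4 * ((k : ℝ) + 1)) ≤ ellipticCoeff (k + 1) := by
  have hmono : Monotone fun k : ℕ => ((k : ℝ) + 1) * ellipticCoeff (k + 1) := by
    refine monotone_nat_of_le_succ fun k => ?_
    have h := succ (k + 1)
    have := pos (k + 1)
    push_cast at h ⊢
    nlinarith
  have h := hmono (Nat.zero_le k)
  simp only [Nat.cast_zero, zero_add, one_mul, one] at h
  rw [div_le_iff₀ (by positivity)]
  linarith

lemma not_summable : ¬ Summable ellipticCoeff := by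
  intro h
  have hinv : Summable fun k : ℕ => 1 / (4 * ((k : ℝ) + 1)) :=
    ((summable_nat_add_iff 1).2 h).of_nonneg_of_le (fun k => by positivity) inv_le
  have : Summable fun n : ℕ => 1 / (n : ℝ) := by
    refine (summable_nat_add_iff 1).1 ((hinv.mul_left 4).congr fun k => ?_)
    push_cast
    field_simp
  exact Real.not_summable_one_div_natCast this

end ellipticCoeff

lemma logConv_ellipticCoeff_succ (n : ℕ) :
    ((n : ℝ) + 1) ^ 2 * logConv ellipticCoeff (n + 1) =
      ((n : ℝ) + 1 / 2) ^ 2 * logConv ellipticCoeff n + (2 * n + 1) * ellipticCoeff n := by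
  have h₁ : ((n : ℝ) + 1) ^ 2 * logConv ellipticCoeff (n + 1) =
      ∑ k ∈ range (n + 1),
        ((k : ℝ) ^ 2 * ellipticCoeff k / (n + 1 - k) + (n + 1 + k) * ellipticCoeff k) := by
    rw [logConv, mul_sum]
    refine sum_congr rfl fun k hk => ?_
    have : (n : ℝ) + 1 - k ≠ 0 := by
      have : (k : ℝ) < n + 1 := by exact_mod_cast mem_range.1 hk
      linarith
    push_cast
    field_simp
    ring
  have h₂ : ((n : ℝ) + 1 / 2) ^ 2 * logConv ellipticCoeff n =
      ∑ k ∈ range n,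
        (((k : ℝ) + 1 / 2) ^ 2 * ellipticCoeff k / (n - k) + (n + 1 + k) * ellipticCoeff k) := by
    rw [logConv, mul_sum]
    refine sum_congr rfl fun k hk => ?_
    have : (n : ℝ) - k ≠ 0 := by
      have : (k : ℝ) < n := by exact_mod_cast mem_range.1 hk
      linarith
    field_simp
    ring
  have h₃ : ∑ k ∈ range (n + 1), (k : ℝ) ^ 2 * ellipticCoeff k / (n + 1 - k) =
      ∑ k ∈ range n, ((k : ℝ) + 1 / 2) ^ 2 * ellipticCoeff k / (n - k) := by
    rw [sum_range_succ', Nat.cast_zero, zero_pow two_ne_zero, zero_mul, zero_div, add_zero]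
    refine sum_congr rfl fun k _ => ?_
    rw [Nat.cast_succ, ellipticCoeff.succ, add_sub_add_right_eq_sub]
  rw [h₁, h₂, sum_add_distrib, sum_add_distrib, h₃, sum_range_succ _ n]
  ring

lemma logConv_ellipticCoeff (n : ℕ) :
    logConv ellipticCoeff n = 2 * ellipticCoeff n * (2 * H (2 * n) - H n) := by
  induction n with
  | zero => simp [logConv_zero, H]
  | succ n ih =>
    have hH : H (2 * (n + 1)) = H (2 * n) + 1 / (2 * n + 1) + 1 / (2 * n + 2) := by
      rw [show 2 * (n + 1) = 2 * n + 1 + 1 by ring, H_succ, H_succ]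
      push_cast
      ring
    refine mul_left_cancel₀ (pow_ne_zero 2 (n.cast_add_one_ne_zero : ((n : ℝ) + 1) ≠ 0)) ?_
    have h2n : (2 * n + 1 : ℝ) ≠ 0 := by positivity
    calc ((n : ℝ) + 1) ^ 2 * logConv ellipticCoeff (n + 1)
        = ((n : ℝ) + 1 / 2) ^ 2 * (2 * ellipticCoeff n * (2 * H (2 * n) - H n))
            + (2 * n + 1) * ellipticCoeff n := by rw [logConv_ellipticCoeff_succ, ih]
      _ = 2 * (((n : ℝ) + 1 / 2) ^ 2 * ellipticCoeff n) *
            (2 * (H (2 * n) + 1 / (2 * n + 1) + 1 / (2 * n + 2)) - (H n + 1 / (n + 1))) := by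
          field_simp
          ring
      _ = _ := by rw [← ellipticCoeff.succ, hH, H_succ]; ring

lemma tsum_logConv_ellipticCoeff_mul_pow {t : ℂ} (ht : ‖t‖ ≤ 1) :
    ∑' n, (logConv ellipticCoeff n : ℂ) * t ^ n =
      (∑' k, (ellipticCoeff k : ℂ) * t ^ k) * -Complex.log (1 - t) := by
  have he (k : ℕ) : 0 ≤ ellipticCoeff k := (ellipticCoeff.pos k).le
  rcases ht.lt_or_eq with ht | ht
  · refine tsum_logConv_mul_pow_of_norm_lt_one ?_ ht
    refine (summable_geometric_of_lt_one (norm_nonneg t) ht).of_nonneg_of_le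
      (fun _ => norm_nonneg _) fun k => ?_
    rw [norm_mul, norm_pow, Complex.norm_real, Real.norm_of_nonneg (he k)]
    exact mul_le_of_le_one_left (by positivity) (ellipticCoeff.le_one k)
  · rw [tsum_eq_zero_of_not_summable, tsum_eq_zero_of_not_summable, zero_mul]
    · exact (summable_ofReal_mul_pow_iff ht).not.2 ellipticCoeff.not_summable
    · exact (summable_ofReal_mul_pow_iff ht).not.2
        (not_summable_logConv he ellipticCoeff.not_summable)

theorem stmt_0_general (t : ℂ) (ht : ‖t‖ ≤ 1) :
    2 * ∑' k : ℕ, ((Nat.choose (2 * (k + 1)) (k + 1) : ℂ)) ^ 2 * (t / 16) ^ (k + 1) *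
        (2 * (H (2 * (k + 1)) : ℂ) - (H (k + 1) : ℂ)) =
      -(∑' k : ℕ, ((Nat.choose (2 * k) k : ℂ)) ^ 2 * (t / 16) ^ k) *
        Complex.log (1 - t) := by
  have hcoeff (k : ℕ) :
      ((Nat.choose (2 * k) k : ℂ)) ^ 2 * (t / 16) ^ k = (ellipticCoeff k : ℂ) * t ^ k := by
    rw [ellipticCoeff, ← Nat.centralBinom_eq_two_mul_choose, div_pow]
    push_cast
    ring
  have hterm (k : ℕ) : 2 * ((Nat.choose (2 * (k + 1)) (k + 1) : ℂ) ^ 2 * (t / 16) ^ (k + 1) *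
      (2 * (H (2 * (k + 1)) : ℂ) - (H (k + 1) : ℂ))) =
        (logConv ellipticCoeff (k + 1) : ℂ) * t ^ (k + 1) := by
    rw [hcoeff, logConv_ellipticCoeff]
    push_cast
    ring
  have hshift : ∑' k : ℕ, (logConv ellipticCoeff (k + 1) : ℂ) * t ^ (k + 1) =
      ∑' n, (logConv ellipticCoeff n : ℂ) * t ^ n :=
    Nat.succ_injective.tsum_eq (f := fun n => (logConv ellipticCoeff n : ℂ) * t ^ n) fun n hn =>
      ⟨n - 1, Nat.succ_pred_eq_of_ne_zero (by rintro rfl; simp [logConv_zero] at hn)⟩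
  rw [← tsum_mul_left, tsum_congr hterm, hshift, tsum_logConv_ellipticCoeff_mul_pow ht,
    tsum_congr hcoeff]
  ring

theorem stmt_0 (t : ℂ) (ht : ‖t‖ ≤ 1) (ht1 : t ≠ 1) :
    2 * ∑' k : ℕ, ((Nat.choose (2 * (k + 1)) (k + 1) : ℂ)) ^ 2 * (t / 16) ^ (k + 1) *
        (2 * (H (2 * (k + 1)) : ℂ) - (H (k + 1) : ℂ)) =
      -(∑' k : ℕ, ((Nat.choose (2 * k) k : ℂ)) ^ 2 * (t / 16) ^ k) *
        Complex.log (1 - t) :=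
  stmt_0_general t ht
end

section
/- For every complex number t with |t| ≤ 1 and t ≠ 1, one has Σ_{k=1}^∞ C(2k,k) C(3k,k) (t/27)^k (3H_{3k} − H_k) = −(Σ_{k=0}^∞ C(2k,k) C(3k,k) (t/27)^k) · Log(1−t). -/
/-!
Write `a n = C(2n,n) C(3n,n) / 27^n` and `c n = 3 H_{3n} - H_n`. For `‖t‖ < 1` the identity is the
Cauchy product of `∑ a n t^n` with `-log (1 - t) = ∑ t^m / m`, and comparing coefficients it
amounts to `a n c n = ∑_{k<n} a k / (n - k)`. Both sides of this satisfy the same first-order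
recurrence, derived from `9 (n+1)² a (n+1) = (3n+1)(3n+2) a n` (for the right-hand side by
telescoping). For `‖t‖ ≥ 1` neither series is summable, because `n a n ≥ 2/9` and
`a n c n ≥ a 0 / n = 1 / n`, so both `tsum`s take the junk value `0`.
-/

namespace BinomialHarmonicSeries

open Finset

noncomputable def coeff (n : ℕ) : ℝ :=
  (Nat.choose (2 * n) n * Nat.choose (3 * n) n : ℝ) / 27 ^ n

noncomputable def harmonicWeight (n : ℕ) : ℝ := 3 * H (3 * n) - H n

theorem choose_mul_choose_mul_factorial_pow (n : ℕ) :
    Nat.choose (2 * n) n * Nat.choose (3 * n) n * n.factorial ^ 3 = (3 * n).factorial := by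
  have h2 := Nat.choose_mul_factorial_mul_factorial (show n ≤ 2 * n by omega)
  have h3 := Nat.choose_mul_factorial_mul_factorial (show n ≤ 3 * n by omega)
  rw [show 2 * n - n = n by omega] at h2
  rw [show 3 * n - n = 2 * n by omega, ← h2] at h3
  rw [← h3]
  ring

theorem coeff_eq_factorial (n : ℕ) :
    coeff n = (3 * n).factorial / ((n.factorial : ℝ) ^ 3 * 27 ^ n) := by
  rw [coeff, ← choose_mul_choose_mul_factorial_pow]
  have := n.factorial_pos
  push_cast
  field_simp

theorem coeff_zero : coeff 0 = 1 := by simp [coeff]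

theorem coeff_succ (n : ℕ) :
    coeff (n + 1) = (3 * n + 1) * (3 * n + 2) / (9 * (n + 1) ^ 2) * coeff n := by
  rw [coeff_eq_factorial, coeff_eq_factorial, show 3 * (n + 1) = 3 * n + 2 + 1 by ring]
  have := n.factorial_pos
  simp only [Nat.factorial_succ]
  push_cast
  field_simp
  ring

theorem coeff_pos (n : ℕ) : 0 < coeff n := by
  rw [coeff_eq_factorial]
  have := n.factorial_pos
  positivity

theorem coeff_le_one (n : ℕ) : coeff n ≤ 1 := by
  induction n with
  | zero => rw [coeff_zero]
  | succ n ih =>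
    have hratio : (3 * n + 1) * (3 * n + 2) / (9 * ((n : ℝ) + 1) ^ 2) ≤ 1 := by
      rw [div_le_one (by positivity)]
      nlinarith
    rw [coeff_succ]
    exact (mul_le_of_le_one_left (coeff_pos n).le hratio).trans ih

theorem two_ninths_le_mul_coeff {n : ℕ} (hn : 0 < n) : 2 / 9 ≤ n * coeff n := by
  induction n, hn using Nat.le_induction with
  | base => norm_num [coeff]
  | succ n hn ih =>
    have hn : (1 : ℝ) ≤ n := by exact_mod_cast hn
    have hstep : (n : ℝ) * coeff n ≤ (n + 1 : ℕ) * coeff (n + 1) := by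
      rw [coeff_succ]
      push_cast
      field_simp
      nlinarith [coeff_pos n]
    exact ih.trans hstep

theorem harmonicWeight_zero : harmonicWeight 0 = 0 := by simp [harmonicWeight, H]

theorem H_succ (n : ℕ) : H (n + 1) = H n + 1 / (n + 1) := by
  simp [H, sum_range_succ]

theorem harmonicWeight_succ (n : ℕ) :
    harmonicWeight (n + 1) = harmonicWeight n + 3 / (3 * n + 1) + 3 / (3 * n + 2) := by
  rw [harmonicWeight, harmonicWeight, show 3 * (n + 1) = 3 * n + 1 + 1 + 1 by ring]
  simp only [H_succ]
  push_cast
  field_simp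
  ring

theorem sum_coeff_div_succ (n : ℕ) :
    9 * ((n : ℝ) + 1) ^ 2 * ∑ k ∈ range (n + 1), coeff k / (n + 1 - k) =
      (3 * n + 1) * (3 * n + 2) * ∑ k ∈ range n, coeff k / (n - k) + 9 * (2 * n + 1) * coeff n := by
  set f : ℕ → ℝ := fun k => 9 * (k : ℝ) ^ 2 * coeff k / (n + 1 - k) with hf
  have hterm : ∀ k ∈ range n,
      9 * ((n : ℝ) + 1) ^ 2 * (coeff k / (n + 1 - k)) -
        (3 * n + 1) * (3 * n + 2) * (coeff k / (n - k)) = f k - f (k + 1) := by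
    intro k hk
    have hkn : (k : ℝ) + 1 ≤ n := by exact_mod_cast mem_range.mp hk
    have h1 : (n : ℝ) - k ≠ 0 := by linarith
    have h2 : (n : ℝ) + 1 - k ≠ 0 := by linarith
    have h3 : (n : ℝ) + 1 - (k + 1) ≠ 0 := by linarith
    simp only [hf, coeff_succ]
    push_cast
    field_simp
    ring
  have htel := sum_range_sub' f n
  rw [← sum_congr rfl hterm, sum_sub_distrib, ← mul_sum, ← mul_sum] at htel
  simp only [hf, sum_range_succ, CharP.cast_eq_zero, add_sub_cancel_left] at htel ⊢
  linear_combination htel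

theorem coeff_mul_harmonicWeight (n : ℕ) :
    coeff n * harmonicWeight n = ∑ k ∈ range n, coeff k / (n - k) := by
  induction n with
  | zero => simp [harmonicWeight_zero]
  | succ n ih =>
    have h9 : 9 * ((n : ℝ) + 1) ^ 2 ≠ 0 := by positivity
    apply mul_left_cancel₀ h9
    push_cast
    rw [sum_coeff_div_succ, ← ih, coeff_succ, harmonicWeight_succ]
    field_simp
    ring

theorem one_div_le_coeff_mul_harmonicWeight {n : ℕ} (hn : 0 < n) :
    1 / n ≤ coeff n * harmonicWeight n := by
  rw [coeff_mul_harmonicWeight]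
  have hle := single_le_sum (f := fun k => coeff k / (n - k))
    (fun k hk => div_nonneg (coeff_pos k).le (by simpa using (mem_range.mp hk).le))
    (mem_range.mpr hn)
  simpa [coeff_zero] using hle

theorem summable_norm_mul_pow {R : Type*} [NormedDivisionRing R] {u : ℕ → R}
    (hu : ∀ n, ‖u n‖ ≤ 1) {t : R} (ht : ‖t‖ < 1) :
    Summable fun n => ‖u n * t ^ n‖ := by
  refine (summable_geometric_of_lt_one (norm_nonneg t) ht).of_nonneg_of_le (fun _ => norm_nonneg _)
    fun n => ?_
  rw [norm_mul, norm_pow]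
  exact mul_le_of_le_one_left (by positivity) (hu n)

theorem not_summable_of_div_le_norm {E : Type*} [NormedAddCommGroup E] [NormedSpace ℝ E]
    [FiniteDimensional ℝ E] {f : ℕ → E} {C : ℝ} (hC : 0 < C)
    (h : ∀ n, 0 < n → C / n ≤ ‖f n‖) : ¬Summable f := by
  intro hf
  have hle : ∀ n : ℕ, C * (n : ℝ)⁻¹ ≤ ‖f n‖ := by
    intro n
    rcases n.eq_zero_or_pos with rfl | hn
    · simp
    · exact div_eq_mul_inv C n ▸ h n hn
  have hsum := (summable_norm_iff.mpr hf).of_nonneg_of_le (fun n => by positivity) hle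
  exact Real.not_summable_natCast_inv ((summable_mul_left_iff hC.ne').mp hsum)

theorem le_norm_ofReal_mul_pow {x : ℝ} (hx : 0 ≤ x) {t : ℂ} (ht : 1 ≤ ‖t‖) (n : ℕ) :
    x ≤ ‖(x : ℂ) * t ^ n‖ := by
  rw [norm_mul, norm_pow, Complex.norm_real, Real.norm_of_nonneg hx]
  exact le_mul_of_one_le_right hx (one_le_pow₀ ht)

theorem not_summable_coeff_mul_pow {t : ℂ} (ht : 1 ≤ ‖t‖) :
    ¬Summable fun n => (coeff n : ℂ) * t ^ n :=
  not_summable_of_div_le_norm (by norm_num : (0 : ℝ) < 2 / 9) fun n hn =>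
    ((div_le_iff₀' (by exact_mod_cast hn)).mpr (two_ninths_le_mul_coeff hn)).trans
      (le_norm_ofReal_mul_pow (coeff_pos n).le ht n)

theorem not_summable_coeff_mul_pow_mul_harmonicWeight {t : ℂ} (ht : 1 ≤ ‖t‖) :
    ¬Summable fun n => (coeff n : ℂ) * t ^ n * harmonicWeight n := by
  refine not_summable_of_div_le_norm one_pos fun n hn => ?_
  have hle := one_div_le_coeff_mul_harmonicWeight hn
  have hnorm := le_norm_ofReal_mul_pow ((one_div_nonneg.mpr n.cast_nonneg).trans hle) ht n
  rw [Complex.ofReal_mul, mul_right_comm] at hnorm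
  exact hle.trans hnorm

theorem sum_range_succ_coeff_mul_pow_mul_pow_div (t : ℂ) (n : ℕ) :
    ∑ k ∈ range (n + 1), (coeff k : ℂ) * t ^ k * (t ^ (n - k) / (n - k : ℕ)) =
      (coeff n : ℂ) * t ^ n * harmonicWeight n := by
  have hterm : ∀ k ∈ range n, (coeff k : ℂ) * t ^ k * (t ^ (n - k) / (n - k : ℕ)) =
      ((coeff k / (n - k) : ℝ) : ℂ) * t ^ n := by
    intro k hk
    have hkn := (mem_range.mp hk).le
    have hne : (n : ℂ) - k ≠ 0 := sub_ne_zero.mpr (by exact_mod_cast (mem_range.mp hk).ne')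
    rw [← pow_mul_pow_sub t hkn, Nat.cast_sub hkn]
    push_cast
    field_simp
  rw [sum_range_succ, Nat.sub_self, Nat.cast_zero, div_zero, mul_zero, add_zero,
    sum_congr rfl hterm, ← sum_mul, ← Complex.ofReal_sum, ← coeff_mul_harmonicWeight]
  push_cast
  ring

theorem hasSum_coeff_mul_pow_mul_harmonicWeight {t : ℂ} (ht : ‖t‖ < 1) :
    HasSum (fun n => (coeff n : ℂ) * t ^ n * harmonicWeight n)
      ((∑' n, (coeff n : ℂ) * t ^ n) * -Complex.log (1 - t)) := by
  have hcoeff : Summable fun n => ‖(coeff n : ℂ) * t ^ n‖ :=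
    summable_norm_mul_pow (fun n => by
      rw [Complex.norm_real, Real.norm_of_nonneg (coeff_pos n).le]; exact coeff_le_one n) ht
  have hlog : Summable fun n : ℕ => ‖t ^ n / n‖ := by
    simp_rw [div_eq_inv_mul]
    exact summable_norm_mul_pow (fun n => by simpa using Nat.cast_inv_le_one n) ht
  have hcauchy := hasSum_sum_range_mul_of_summable_norm hcoeff hlog
  rwa [(Complex.hasSum_taylorSeries_neg_log ht).tsum_eq,
    funext (sum_range_succ_coeff_mul_pow_mul_pow_div t)] at hcauchy

theorem choose_mul_choose_mul_div_pow (t : ℂ) (k : ℕ) :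
    (Nat.choose (2 * k) k : ℂ) * Nat.choose (3 * k) k * (t / 27) ^ k = (coeff k : ℂ) * t ^ k := by
  simp only [coeff]
  push_cast
  rw [div_pow]
  ring

theorem ofReal_harmonicWeight (n : ℕ) :
    (harmonicWeight n : ℂ) = 3 * (H (3 * n) : ℂ) - H n := by
  simp [harmonicWeight]

end BinomialHarmonicSeries

open BinomialHarmonicSeries in
theorem stmt_1_general (t : ℂ) :
    ∑' k : ℕ, ((Nat.choose (2 * (k + 1)) (k + 1) : ℂ)) *
        ((Nat.choose (3 * (k + 1)) (k + 1) : ℂ)) * (t / 27) ^ (k + 1) *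
        (3 * (H (3 * (k + 1)) : ℂ) - (H (k + 1) : ℂ)) =
      -(∑' k : ℕ, ((Nat.choose (2 * k) k : ℂ)) * ((Nat.choose (3 * k) k : ℂ)) * (t / 27) ^ k) *
        Complex.log (1 - t) := by
  simp_rw [choose_mul_choose_mul_div_pow, ← ofReal_harmonicWeight]
  rcases lt_or_ge ‖t‖ 1 with ht | ht
  · rw [((hasSum_nat_add_iff' 1).mpr (hasSum_coeff_mul_pow_mul_harmonicWeight ht)).tsum_eq]
    simp [harmonicWeight_zero]
  · rw [tsum_eq_zero_of_not_summable
      ((summable_nat_add_iff 1).not.mpr (not_summable_coeff_mul_pow_mul_harmonicWeight ht)),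
      tsum_eq_zero_of_not_summable (not_summable_coeff_mul_pow ht)]
    ring

theorem stmt_1 (t : ℂ) (ht : ‖t‖ ≤ 1) (ht1 : t ≠ 1) :
    ∑' k : ℕ, ((Nat.choose (2 * (k + 1)) (k + 1) : ℂ)) *
        ((Nat.choose (3 * (k + 1)) (k + 1) : ℂ)) * (t / 27) ^ (k + 1) *
        (3 * (H (3 * (k + 1)) : ℂ) - (H (k + 1) : ℂ)) =
      -(∑' k : ℕ, ((Nat.choose (2 * k) k : ℂ)) * ((Nat.choose (3 * k) k : ℂ)) * (t / 27) ^ k) *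
        Complex.log (1 - t) :=
  stmt_1_general t
end

section
/- Let ν ∈ (−1,0) and let t be a complex number with |t| < 1. Then the function F of a complex variable ε defined by F(ε) = Σ_{k=0}^∞ ((−ν+ε)_k (ν+1+ε)_k / (k!)²) t^k is differentiable at ε = 0, and its derivative there equals −(Σ_{k=0}^∞ ((−ν)_k (ν+1)_k / (k!)²) t^k) · Log(1−t). -/
/-!
With `a = -ν`, `b = ν + 1` and `c_k(a, b) = (a)_k (b)_k / (k!)²`, the series is
`₂F₁(a + ε, b + ε; 1; t)`. Its terms are polynomial in `ε` and, for `|ε| < 1`, bounded by the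
terms of the convergent series `₂F₁(r, r; 1; |t|)` for some `r > 0`, so it can be differentiated
termwise; this gives `∑ c_k s_k tᵏ` with `s_k = ∑_{j<k} (1/(a+j) + 1/(b+j))`. Because
`a + b = 1`, a telescoping sum shows `c_k s_k = ∑_{m<k} c_m / (k - m)`, the coefficient of the
Cauchy product of `∑ c_k tᵏ` with `∑ tⁿ/n = -Log(1 - t)`.
-/

open Finset Nat

-- The coefficient of `tᵏ` in `₂F₁(a, b; 1; t)`.
noncomputable def hypergeomCoeff {𝕜 : Type*} [Field 𝕜] (a b : 𝕜) (k : ℕ) : 𝕜 :=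
  (ascPochhammer 𝕜 k).eval a * (ascPochhammer 𝕜 k).eval b / (k ! : 𝕜) ^ 2

section Identity

variable {𝕜 : Type*} [Field 𝕜] [CharZero 𝕜] (a b : 𝕜)

theorem hypergeomCoeff_succ_mul (k : ℕ) :
    hypergeomCoeff a b (k + 1) * ((k : 𝕜) + 1) ^ 2 =
      hypergeomCoeff a b k * ((a + k) * (b + k)) := by
  have hk : (k : 𝕜) + 1 ≠ 0 := by exact_mod_cast k.succ_ne_zero
  simp only [hypergeomCoeff, ascPochhammer_succ_eval, factorial_succ, cast_mul, cast_succ]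
  field_simp

theorem sum_range_succ_hypergeomCoeff_div (hab : a + b = 1) (k : ℕ) :
    ((k : 𝕜) + 1) ^ 2 * ∑ m ∈ range (k + 1), hypergeomCoeff a b m / ((k + 1 : ℕ) - m) =
      (a + k) * (b + k) * ∑ m ∈ range k, hypergeomCoeff a b m / (k - m) +
        (2 * k + 1) * hypergeomCoeff a b k := by
  set c := hypergeomCoeff a b
  -- `a + b = 1` enters through `(a + m) (b + m) - (a + k) (b + k) = (m - k) (m + k + 1)`.
  set T : ℕ → 𝕜 := fun m => (m : 𝕜) ^ 2 * c m / ((k : 𝕜) + 1 - m)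
  have hstep : ∀ m ∈ range k, T (m + 1) - T m =
      (a + k) * (b + k) * (c m / (k - m)) - ((k : 𝕜) + 1) ^ 2 * (c m / ((k : 𝕜) + 1 - m)) := by
    intro m hm
    have hmk : m < k := mem_range.1 hm
    have h₁ : (k : 𝕜) - m ≠ 0 := sub_ne_zero.2 (by exact_mod_cast hmk.ne')
    have h₂ : (k : 𝕜) + 1 - m ≠ 0 :=
      sub_ne_zero.2 (by exact_mod_cast (hmk.trans k.lt_succ_self).ne')
    have hT : T (m + 1) = c m * ((a + m) * (b + m)) / (k - m) := by
      simp only [T, ← hypergeomCoeff_succ_mul, c]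
      push_cast
      rw [show (k : 𝕜) + 1 - (m + 1) = k - m by ring]
      ring
    rw [hT, show b = 1 - a by linear_combination hab]
    simp only [T]
    field_simp
    ring
  have htel := sum_range_sub T k
  rw [sum_congr rfl hstep, sum_sub_distrib, ← mul_sum, ← mul_sum] at htel
  simp only [T, cast_zero, add_sub_cancel_left, div_one, zero_pow two_ne_zero, zero_mul, zero_div,
    sub_zero] at htel
  rw [sum_range_succ]
  push_cast
  rw [add_sub_cancel_left, div_one]
  linear_combination -htel

theorem hypergeomCoeff_mul_sum_inv (hab : a + b = 1) (ha : ∀ j : ℕ, a + j ≠ 0)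
    (hb : ∀ j : ℕ, b + j ≠ 0) (k : ℕ) :
    hypergeomCoeff a b k * ∑ j ∈ range k, ((a + j)⁻¹ + (b + j)⁻¹) =
      ∑ m ∈ range k, hypergeomCoeff a b m / (k - m) := by
  induction k with
  | zero => simp
  | succ k ih =>
    have hk : ((k : 𝕜) + 1) ^ 2 ≠ 0 := pow_ne_zero _ (by exact_mod_cast k.succ_ne_zero)
    refine mul_left_cancel₀ hk ?_
    rw [sum_range_succ_hypergeomCoeff_div a b hab, ← ih, sum_range_succ, ← mul_assoc,
      mul_comm _ (hypergeomCoeff _ _ _), ← mul_assoc, hypergeomCoeff_succ_mul]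
    have := ha k
    have := hb k
    obtain rfl : b = 1 - a := eq_sub_of_add_eq' hab
    field_simp
    ring

end Identity

theorem hasDerivAt_ascPochhammer_eval {𝕜 : Type*} [NontriviallyNormedField 𝕜] {x : 𝕜} (k : ℕ)
    (hx : ∀ j < k, x + j ≠ 0) :
    HasDerivAt (fun z => (ascPochhammer 𝕜 k).eval z)
      ((ascPochhammer 𝕜 k).eval x * ∑ j ∈ range k, (x + j)⁻¹) x := by
  induction k with
  | zero => simpa using hasDerivAt_const x (1 : 𝕜)
  | succ k ih =>
    simp only [ascPochhammer_succ_eval]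
    refine ((ih fun j hj => hx j (hj.trans k.lt_succ_self)).mul
      ((hasDerivAt_id x).add_const (k : 𝕜))).congr_deriv ?_
    have := hx k k.lt_succ_self
    rw [sum_range_succ, id]
    field_simp

theorem norm_ascPochhammer_eval_le {R : Type*} [NormedRing R] [NormOneClass R] {x : R} {r : ℝ}
    (hx : ‖x‖ ≤ r) (k : ℕ) : ‖(ascPochhammer R k).eval x‖ ≤ (ascPochhammer ℝ k).eval r := by
  induction k with
  | zero => simp
  | succ k ih =>
    simp only [ascPochhammer_succ_eval]
    refine (norm_mul_le _ _).trans (mul_le_mul ih ?_ (norm_nonneg _) ((norm_nonneg _).trans ih))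
    calc ‖x + k‖ ≤ ‖x‖ + ‖(k : R)‖ := norm_add_le _ _
      _ ≤ r + k := add_le_add hx (by simpa using Nat.norm_cast_le (α := R) k)

theorem norm_hypergeomCoeff_le {𝕜 : Type*} [RCLike 𝕜] {a b : 𝕜} {r : ℝ} (ha : ‖a‖ ≤ r)
    (hb : ‖b‖ ≤ r) (k : ℕ) : ‖hypergeomCoeff a b k‖ ≤ hypergeomCoeff r r k := by
  rw [hypergeomCoeff, hypergeomCoeff, norm_div, norm_mul, norm_pow, RCLike.norm_natCast]
  gcongr
  · exact (norm_nonneg _).trans (norm_ascPochhammer_eval_le ha k)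
  · exact norm_ascPochhammer_eval_le ha k
  · exact norm_ascPochhammer_eval_le hb k

theorem summable_norm_hypergeomCoeff_mul_pow {𝕜 : Type*} [RCLike 𝕜] {a b x : 𝕜}
    (ha : ∀ n : ℕ, a + n ≠ 0) (hb : ∀ n : ℕ, b + n ≠ 0) (hx : ‖x‖ < 1) :
    Summable fun k => ‖hypergeomCoeff a b k * x ^ k‖ := by
  have hradius : (ordinaryHypergeometricSeries 𝕜 a b 1).radius = 1 :=
    ordinaryHypergeometricSeries_radius_eq_one 𝕜 a b 1 fun n =>
      ⟨fun h => ha n (by rw [h]; ring), fun h => hb n (by rw [h]; ring),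
        fun h => Nat.cast_add_one_ne_zero n (by rw [h]; ring)⟩
  have hmem : x ∈ Metric.eball (0 : 𝕜) (ordinaryHypergeometricSeries 𝕜 a b 1).radius := by
    rw [hradius, Metric.mem_eball, edist_zero_right, ← ofReal_norm]
    exact ENNReal.ofReal_lt_one.2 hx
  refine ((ordinaryHypergeometricSeries 𝕜 a b 1).summable_norm_apply hmem).congr fun k => ?_
  rw [ordinaryHypergeometricSeries_apply_eq, ascPochhammer_eval_one, smul_eq_mul, hypergeomCoeff]
  have : (k ! : 𝕜) ≠ 0 := by exact_mod_cast k.factorial_ne_zero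
  congr 1
  field_simp

theorem hasDerivAt_hypergeomCoeff_add {𝕜 : Type*} [NontriviallyNormedField 𝕜] {a b : 𝕜}
    (ha : ∀ j : ℕ, a + j ≠ 0) (hb : ∀ j : ℕ, b + j ≠ 0) (k : ℕ) :
    HasDerivAt (fun ε => hypergeomCoeff (a + ε) (b + ε) k)
      (hypergeomCoeff a b k * ∑ j ∈ range k, ((a + j)⁻¹ + (b + j)⁻¹)) 0 := by
  have hPa := HasDerivAt.comp_const_add a 0
    (by rw [add_zero]; exact hasDerivAt_ascPochhammer_eval k fun j _ => ha j)
  have hPb := HasDerivAt.comp_const_add b 0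
    (by rw [add_zero]; exact hasDerivAt_ascPochhammer_eval k fun j _ => hb j)
  refine ((hPa.mul hPb).div_const _).congr_deriv ?_
  rw [hypergeomCoeff, sum_add_distrib, add_zero, add_zero]
  ring

theorem differentiable_hypergeomCoeff_add {𝕜 : Type*} [NontriviallyNormedField 𝕜] (a b : 𝕜)
    (k : ℕ) :
    Differentiable 𝕜 (fun ε => hypergeomCoeff (a + ε) (b + ε) k) := by
  unfold hypergeomCoeff
  fun_prop

theorem hasDerivAt_tsum_hypergeomCoeff_add_mul_pow {a b t : ℂ} (ha : ∀ j : ℕ, a + j ≠ 0)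
    (hb : ∀ j : ℕ, b + j ≠ 0) (ht : ‖t‖ < 1) :
    HasDerivAt (fun ε => ∑' k, hypergeomCoeff (a + ε) (b + ε) k * t ^ k)
      (∑' k, hypergeomCoeff a b k * (∑ j ∈ range k, ((a + j)⁻¹ + (b + j)⁻¹)) * t ^ k) 0 := by
  set r : ℝ := max ‖a‖ ‖b‖ + 1
  have hu : Summable fun k => ‖hypergeomCoeff r r k * ‖t‖ ^ k‖ :=
    summable_norm_hypergeomCoeff_mul_pow (fun n => by positivity) (fun n => by positivity)
      (by rwa [norm_norm])
  have hle : ∀ k, ∀ ε ∈ Metric.ball (0 : ℂ) 1,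
      ‖hypergeomCoeff (a + ε) (b + ε) k * t ^ k‖ ≤ ‖hypergeomCoeff r r k * ‖t‖ ^ k‖ := by
    intro k ε hε
    have hε : ‖ε‖ ≤ 1 := by simpa using (Metric.mem_ball.1 hε).le
    have hshift : ∀ z : ℂ, ‖z‖ ≤ max ‖a‖ ‖b‖ → ‖z + ε‖ ≤ r := fun z hz =>
      (norm_add_le z ε).trans (add_le_add hz hε)
    rw [norm_mul, norm_pow]
    refine (mul_le_mul_of_nonneg_right (norm_hypergeomCoeff_le (hshift a (le_max_left _ _))
      (hshift b (le_max_right _ _)) k) (by positivity)).trans (le_abs_self _)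
  have hdiff k : DifferentiableOn ℂ (fun ε => hypergeomCoeff (a + ε) (b + ε) k * t ^ k)
      (Metric.ball 0 1) :=
    ((differentiable_hypergeomCoeff_add a b k).mul_const _).differentiableOn
  have h0 : (0 : ℂ) ∈ Metric.ball (0 : ℂ) 1 := Metric.mem_ball_self one_pos
  have hderiv := Complex.hasSum_deriv_of_summable_norm hu hdiff Metric.isOpen_ball hle h0
  simp only [((hasDerivAt_hypergeomCoeff_add ha hb _).mul_const _).deriv] at hderiv
  rw [hderiv.tsum_eq]
  have hF := Complex.differentiableOn_tsum_of_summable_norm hu hdiff Metric.isOpen_ball hle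
  exact (hF.differentiableAt (Metric.isOpen_ball.mem_nhds h0)).hasDerivAt

theorem summable_norm_pow_div_natCast {t : ℂ} (ht : ‖t‖ < 1) :
    Summable fun n : ℕ => ‖t ^ n / n‖ := by
  refine .of_nonneg_of_le (fun _ => norm_nonneg _) (fun n => ?_)
    (summable_geometric_of_lt_one (norm_nonneg t) ht)
  rw [norm_div, norm_pow, Complex.norm_natCast]
  rcases n.eq_zero_or_pos with rfl | hn
  · simp
  · exact div_le_self (by positivity) (by exact_mod_cast hn)

theorem tsum_hypergeomCoeff_mul_sum_inv_mul_pow {a b t : ℂ} (hab : a + b = 1)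
    (ha : ∀ j : ℕ, a + j ≠ 0) (hb : ∀ j : ℕ, b + j ≠ 0) (ht : ‖t‖ < 1) :
    ∑' k, hypergeomCoeff a b k * (∑ j ∈ range k, ((a + j)⁻¹ + (b + j)⁻¹)) * t ^ k =
      -(∑' k, hypergeomCoeff a b k * t ^ k) * Complex.log (1 - t) := by
  have hc : Summable fun k => ‖hypergeomCoeff a b k * t ^ k‖ :=
    summable_norm_hypergeomCoeff_mul_pow ha hb ht
  rw [neg_mul, ← mul_neg, ← (Complex.hasSum_taylorSeries_neg_log ht).tsum_eq,
    tsum_mul_tsum_eq_tsum_sum_range_of_summable_norm hc (summable_norm_pow_div_natCast ht)]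
  refine tsum_congr fun n => ?_
  rw [hypergeomCoeff_mul_sum_inv a b hab ha hb, sum_range_succ, Nat.sub_self, cast_zero, div_zero,
    mul_zero, add_zero, sum_mul]
  refine sum_congr rfl fun m hm => ?_
  have hmn := (mem_range.1 hm).le
  rw [cast_sub hmn, ← pow_mul_pow_sub t hmn]
  ring

theorem ofReal_add_natCast_ne_zero {x : ℝ} (hx : 0 < x) (j : ℕ) : (x : ℂ) + j ≠ 0 := by
  exact_mod_cast (by positivity : x + j ≠ 0)

theorem stmt_5 (ν : ℝ) (hν : ν ∈ Set.Ioo (-1 : ℝ) 0) (t : ℂ) (ht : ‖t‖ < 1) :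
    HasDerivAt
      (fun ε : ℂ => ∑' k : ℕ,
        ((ascPochhammer ℂ k).eval (-(ν : ℂ) + ε) * (ascPochhammer ℂ k).eval ((ν : ℂ) + 1 + ε) /
          ((Nat.factorial k : ℂ)) ^ 2) * t ^ k)
      (-(∑' k : ℕ,
        ((ascPochhammer ℂ k).eval (-(ν : ℂ)) * (ascPochhammer ℂ k).eval ((ν : ℂ) + 1) /
          ((Nat.factorial k : ℂ)) ^ 2) * t ^ k) * Complex.log (1 - t))
      0 := by
  obtain ⟨hν₁, hν₂⟩ := hν
  have ha (j : ℕ) : -(ν : ℂ) + j ≠ 0 := by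
    simpa using ofReal_add_natCast_ne_zero (neg_pos.2 hν₂) j
  have hb (j : ℕ) : (ν : ℂ) + 1 + j ≠ 0 := by
    simpa using ofReal_add_natCast_ne_zero (by linarith : 0 < ν + 1) j
  have hderiv := hasDerivAt_tsum_hypergeomCoeff_add_mul_pow ha hb ht
  rwa [tsum_hypergeomCoeff_mul_sum_inv_mul_pow (by ring) ha hb ht] at hderiv
end
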